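/- Let k1, k2 ≥ 1, let C1, C2 : Matrix (Fin k1) (Fin k2) ℝ, and set R = C2 − C1. The bi-matrix game (C1, C2) is potential if and only if for all i : Fin k1 and j : Fin k2, R i j = (1/k2)·(∑ μ : Fin k2, R i μ) + (1/k1)·(∑ λ : Fin k1, R λ j) − (1/(k1·k2))·(∑ λ : Fin k1, ∑ μ : Fin k2, R λ μ), i.e., every relative payoff equals its row average plus its column average minus the overall average. -/
import Mathlib


/-- A bi-matrix game `(C1, C2)` is potential if it admits a potential matrix `P`. -/
def IsPotentialBimatrix {k1 k2 : ℕ} (C1 C2 : Matrix (Fin k1) (Fin k2) ℝ) : Prop :=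
  ∃ P : Matrix (Fin k1) (Fin k2) ℝ,
    (∀ i i' : Fin k1, ∀ j : Fin k2, C1 i j - C1 i' j = P i j - P i' j) ∧
    (∀ i : Fin k1, ∀ j j' : Fin k2, C2 i j - C2 i j' = P i j - P i j')

theorem stmt10 (k1 k2 : ℕ) (hk1 : 1 ≤ k1) (hk2 : 1 ≤ k2)
    (C1 C2 R : Matrix (Fin k1) (Fin k2) ℝ) (hR : R = C2 - C1) :
    IsPotentialBimatrix C1 C2 ↔
      ∀ (i : Fin k1) (j : Fin k2),
        R i j = (1 / (k2 : ℝ)) * (∑ μ : Fin k2, R i μ)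
          + (1 / (k1 : ℝ)) * (∑ lam : Fin k1, R lam j)
          - (1 / ((k1 : ℝ) * (k2 : ℝ))) * (∑ lam : Fin k1, ∑ μ : Fin k2, R lam μ) := by
  subst hR
  have hk1' : ((k1 : ℝ)) ≠ 0 := by positivity
  have hk2' : ((k2 : ℝ)) ≠ 0 := by positivity
  constructor
  · rintro ⟨P, h1, h2⟩ i j
    set i0 : Fin k1 := ⟨0, hk1⟩
    set j0 : Fin k2 := ⟨0, hk2⟩
    set a : Fin k1 → ℝ := fun i => C2 i j0 - P i j0 with ha
    set b : Fin k2 → ℝ := fun j => C1 i0 j - P i0 j with hb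
    have key : ∀ i j, (C2 - C1) i j = a i - b j := by
      intro i j
      have e1 := h1 i i0 j
      have e2 := h2 i j j0
      simp only [Matrix.sub_apply, ha, hb]
      linarith
    have s1 : ∀ i, ∑ μ : Fin k2, (C2 - C1) i μ = k2 * a i - ∑ μ : Fin k2, b μ := by
      intro i
      simp [key, Finset.sum_sub_distrib, mul_comm]
    have s2 : ∑ lam : Fin k1, (C2 - C1) lam j = (∑ lam : Fin k1, a lam) - k1 * b j := by
      simp [key, Finset.sum_sub_distrib, mul_comm]
    have s3 : ∑ lam : Fin k1, ∑ μ : Fin k2, (C2 - C1) lam μ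
        = k2 * (∑ lam : Fin k1, a lam) - k1 * ∑ μ : Fin k2, b μ := by
      rw [Finset.sum_congr rfl (fun lam _ => s1 lam), Finset.sum_sub_distrib,
        ← Finset.mul_sum, Finset.sum_const, Finset.card_univ, Fintype.card_fin,
        nsmul_eq_mul]
    rw [key i j, s1 i, s2, s3]
    field_simp
    ring
  · intro h
    refine ⟨fun i j => C1 i j + (1 / (k1 : ℝ)) * ∑ lam : Fin k1, (C2 - C1) lam j, ?_, ?_⟩
    · intro i i' j; ring
    · intro i j j'
      have hj := h i j
      have hj' := h i j'
      simp only [Matrix.sub_apply] at hj hj' ⊢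
      linarith
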